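/- arXiv:1809.05338 — 2 statements merged into one kernel-verified Lean document; each statement's English description precedes it below -/
import Mathlib

section
/- Let F_n, n ∈ ℕ, be distribution functions of nonnegative random variables with unit mean. Then ∫₀^∞ (1 - F_n(s))² ds → 0 as n → ∞ if and only if F_n(x) → 1 for every x > 0. -/
/-!
Write `G n = 1 - F n`: it is antitone, takes values in `[0, 1]` and has integral `1` over
`(0, ∞)`. Monotonicity alone gives `x * G n x ^ 2 ≤ ∫₀^x G n ^ 2 ≤ ∫ G n ^ 2`, which is the
forward direction. Conversely, the tail is controlled by the mean,
`∫₁^∞ G n ^ 2 ≤ G n 1 * ∫ G n = G n 1`, while `∫₀^1 G n ^ 2 → 0` by dominated convergence.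
-/

open MeasureTheory Set Filter Topology

section Antitone

variable {g : ℝ → ℝ} {a : ℝ}

/-- `g ≤ g a` on `(a, ∞)`, so `g ^ 2 ≤ g a * g` there. -/
lemma Antitone.integrableOn_Ioi_sq (hg : Antitone g) (hg0 : ∀ x, 0 ≤ g x)
    (hint : IntegrableOn g (Ioi a)) : IntegrableOn (fun x => g x ^ 2) (Ioi a) := by
  refine (hint.const_mul (g a)).mono' (hg.measurable.pow_const 2).aestronglyMeasurable ?_
  refine ae_restrict_of_forall_mem measurableSet_Ioi fun x hx => ?_
  rw [Real.norm_eq_abs, abs_of_nonneg (pow_nonneg (hg0 x) 2), sq]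
  exact mul_le_mul_of_nonneg_right (hg (le_of_lt hx)) (hg0 x)

lemma Antitone.sq_of_nonneg (hg : Antitone g) (hg0 : ∀ x, 0 ≤ g x) :
    Antitone fun x => g x ^ 2 :=
  fun _ y hxy => pow_le_pow_left₀ (hg0 y) (hg hxy) 2

lemma Antitone.mul_le_setIntegral_Ioi (hg : Antitone g) (hg0 : ∀ x, 0 ≤ g x)
    (hint : IntegrableOn g (Ioi a)) {x : ℝ} (hax : a ≤ x) :
    (x - a) * g x ≤ ∫ s in Ioi a, g s :=
  calc (x - a) * g x = ∫ _ in Ioc a x, g x := by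
        rw [setIntegral_const, Measure.real, Real.volume_Ioc,
          ENNReal.toReal_ofReal (sub_nonneg.2 hax), smul_eq_mul]
    _ ≤ ∫ s in Ioc a x, g s :=
        setIntegral_mono_on (integrableOn_const measure_Ioc_lt_top.ne)
          (hint.mono_set Ioc_subset_Ioi_self) measurableSet_Ioc fun s hs => hg hs.2
    _ ≤ ∫ s in Ioi a, g s :=
        setIntegral_mono_set hint (ae_of_all _ fun s => hg0 s)
          Ioc_subset_Ioi_self.eventuallyLE

lemma Antitone.setIntegral_Ioi_sq_le (hg : Antitone g) (hg0 : ∀ x, 0 ≤ g x)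
    (hint : IntegrableOn g (Ioi a)) {b : ℝ} (hab : a ≤ b) :
    ∫ s in Ioi a, g s ^ 2 ≤ (∫ s in Ioc a b, g s ^ 2) + g b * ∫ s in Ioi a, g s := by
  have hint2 := hg.integrableOn_Ioi_sq hg0 hint
  have hintb : IntegrableOn g (Ioi b) := hint.mono_set (Ioi_subset_Ioi hab)
  have htail : ∫ s in Ioi b, g s ^ 2 ≤ g b * ∫ s in Ioi a, g s :=
    calc ∫ s in Ioi b, g s ^ 2 ≤ ∫ s in Ioi b, g b * g s :=
          setIntegral_mono_on (hint2.mono_set (Ioi_subset_Ioi hab)) (hintb.const_mul _)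
            measurableSet_Ioi fun s hs => by
              rw [sq]; exact mul_le_mul_of_nonneg_right (hg (le_of_lt hs)) (hg0 s)
      _ = g b * ∫ s in Ioi b, g s := integral_const_mul _ _
      _ ≤ g b * ∫ s in Ioi a, g s :=
          mul_le_mul_of_nonneg_left (setIntegral_mono_set hint (ae_of_all _ fun s => hg0 s)
            (Ioi_subset_Ioi hab).eventuallyLE) (hg0 b)
  have hsplit : ∫ s in Ioi a, g s ^ 2 = (∫ s in Ioc a b, g s ^ 2) + ∫ s in Ioi b, g s ^ 2 := by
    rw [← setIntegral_union (Ioc_disjoint_Ioi le_rfl) measurableSet_Ioi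
      (hint2.mono_set Ioc_subset_Ioi_self) (hint2.mono_set (Ioi_subset_Ioi hab)),
      Ioc_union_Ioi_eq_Ioi hab]
  linarith

end Antitone

lemma tendsto_setIntegral_zero_of_bounded {α : Type*} [MeasurableSpace α] {μ : Measure α}
    {s : Set α} (hs : MeasurableSet s) (hμs : μ s ≠ ⊤) {G : ℕ → α → ℝ} {C : ℝ}
    (hmeas : ∀ n, AEStronglyMeasurable (G n) (μ.restrict s)) (hC : ∀ n x, |G n x| ≤ C)
    (hlim : ∀ x ∈ s, Tendsto (G · x) atTop (𝓝 0)) :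
    Tendsto (fun n => ∫ x in s, G n x ∂μ) atTop (𝓝 0) := by
  simpa using tendsto_integral_of_dominated_convergence (fun _ => C) hmeas
    (integrableOn_const hμs) (fun n => ae_of_all _ fun x => hC n x)
    (ae_restrict_of_forall_mem hs hlim)

lemma tendsto_one_sub_nhds_zero_iff {u : ℕ → ℝ} :
    Tendsto (fun n => 1 - u n) atTop (𝓝 0) ↔ Tendsto u atTop (𝓝 1) := by
  constructor <;> intro h <;> simpa using (tendsto_const_nhds (x := (1 : ℝ))).sub h

theorem stmt_10_general (F : ℕ → ℝ → ℝ) (hmono : ∀ n, Monotone (F n))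
    (h0 : ∀ n t, 0 ≤ F n t) (h1 : ∀ n t, F n t ≤ 1)
    (hmean : ∀ n, ∫ t in Ioi (0 : ℝ), (1 - F n t) = 1) :
    Tendsto (fun n => ∫ s in Ioi (0 : ℝ), (1 - F n s) ^ 2) atTop (nhds 0) ↔
      ∀ x : ℝ, 0 < x → Tendsto (fun n => F n x) atTop (nhds 1) := by
  have hanti (n) : Antitone fun s => 1 - F n s := fun _ _ h => sub_le_sub_left (hmono n h) 1
  have hnonneg (n s) : 0 ≤ 1 - F n s := sub_nonneg.2 (h1 n s)
  have hint (n) : IntegrableOn (fun s => 1 - F n s) (Ioi 0) :=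
    Integrable.of_integral_ne_zero (by rw [hmean n]; exact one_ne_zero)
  constructor
  · intro h x hx
    have hmarkov (n) : x * (1 - F n x) ^ 2 ≤ ∫ s in Ioi 0, (1 - F n s) ^ 2 := by
      simpa using ((hanti n).sq_of_nonneg (hnonneg n)).mul_le_setIntegral_Ioi
        (fun s => sq_nonneg _) ((hanti n).integrableOn_Ioi_sq (hnonneg n) (hint n)) hx.le
    have hsq : Tendsto (fun n => (1 - F n x) ^ 2) atTop (𝓝 0) :=
      squeeze_zero (fun n => sq_nonneg _) (fun n => (le_div_iff₀' hx).2 (hmarkov n))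
        (by simpa using h.div_const x)
    rw [← tendsto_one_sub_nhds_zero_iff]
    simpa [Real.sqrt_sq (hnonneg _ x)] using hsq.sqrt
  · intro h
    have hsplit (n) : ∫ s in Ioi 0, (1 - F n s) ^ 2 ≤
        (∫ s in Ioc 0 1, (1 - F n s) ^ 2) + (1 - F n 1) := by
      simpa [hmean n] using (hanti n).setIntegral_Ioi_sq_le (hnonneg n) (hint n) zero_le_one
    have hnear : Tendsto (fun n => ∫ s in Ioc 0 1, (1 - F n s) ^ 2) atTop (𝓝 0) :=
      tendsto_setIntegral_zero_of_bounded measurableSet_Ioc measure_Ioc_lt_top.ne (C := 1)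
        (fun n => ((hanti n).measurable.pow_const 2).aestronglyMeasurable)
        (fun n s => by
          rw [abs_of_nonneg (sq_nonneg _)]
          exact pow_le_one₀ (hnonneg n s) (by linarith [h0 n s]))
        (fun s hs => by simpa using (tendsto_one_sub_nhds_zero_iff.2 (h s hs.1)).pow 2)
    refine squeeze_zero (fun n => setIntegral_nonneg measurableSet_Ioi fun s _ => sq_nonneg _)
      hsplit ?_
    simpa using hnear.add (tendsto_one_sub_nhds_zero_iff.2 (h 1 one_pos))

/-- For unit-mean distribution functions `F_n`, `∫₀^∞ (1 - F_n s)² ds → 0`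
if and only if `F_n x → 1` for every `x > 0`. -/
theorem stmt_10 (F : ℕ → ℝ → ℝ) (hmono : ∀ n, Monotone (F n))
    (hrc : ∀ n t, ContinuousWithinAt (F n) (Ici t) t)
    (h0 : ∀ n t, 0 ≤ F n t) (h1 : ∀ n t, F n t ≤ 1)
    (hlim : ∀ n, Tendsto (F n) atTop (nhds 1))
    (hmean : ∀ n, ∫ t in Ioi (0 : ℝ), (1 - F n t) = 1) :
    Tendsto (fun n => ∫ s in Ioi (0 : ℝ), (1 - F n s) ^ 2) atTop (nhds 0) ↔
      ∀ x : ℝ, 0 < x → Tendsto (fun n => F n x) atTop (nhds 1) :=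
  stmt_10_general F hmono h0 h1 hmean
end

section
/- Let F be the distribution function of a nonnegative random variable with unit mean, and for z > 0 define Ψ_F(z) := ∫₀^∞ (1 - F(t)^z) dt. Then Ψ_F(1) = 1, Ψ_F is nondecreasing on (0,∞), and Ψ_F is concave on (0,∞). -/
/-!
For `x ∈ [0,1]` the map `z ↦ 1 - x ^ z` is nondecreasing and concave on `(0,∞)`, and
`1 - x ^ z ≤ max 1 z * (1 - x)`, so each integrand `1 - F t ^ z` is dominated by a multiple of
the integrable `1 - F t`. Monotonicity and concavity then pass through the integral in `t`.
-/

open MeasureTheory Set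

namespace Real

variable {x : ℝ}

lemma one_sub_rpow_le_max_mul (hx0 : 0 ≤ x) (hx1 : x ≤ 1) {z : ℝ} (hz : 0 ≤ z) :
    1 - x ^ z ≤ max 1 z * (1 - x) := by
  rcases le_total z 1 with hz1 | hz1
  · have hxz : x ≤ x ^ z := by
      simpa using rpow_le_rpow_of_exponent_ge' hx0 hx1 hz hz1
    nlinarith [le_max_left 1 z]
  · have hB := one_add_mul_self_le_rpow_one_add (by linarith : -1 ≤ x - 1) hz1
    rw [add_sub_cancel] at hB
    rw [max_eq_right hz1]
    linarith

lemma monotoneOn_one_sub_rpow (hx0 : 0 ≤ x) (hx1 : x ≤ 1) :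
    MonotoneOn (fun z : ℝ => 1 - x ^ z) (Ici 0) := fun _ hz _ _ hzw =>
  sub_le_sub_left (rpow_le_rpow_of_exponent_ge' hx0 hx1 hz hzw) 1

lemma convexOn_rpow_left_Ioi (hx0 : 0 ≤ x) : ConvexOn ℝ (Ioi 0) (fun z : ℝ => x ^ z) := by
  rcases hx0.eq_or_lt with rfl | hx
  · exact (convexOn_const 0 (convex_Ioi 0)).congr fun z hz => (zero_rpow (ne_of_gt hz)).symm
  · exact (convexOn_rpow_left hx).subset (subset_univ _) (convex_Ioi 0)

lemma concaveOn_one_sub_rpow (hx0 : 0 ≤ x) : ConcaveOn ℝ (Ioi 0) (fun z : ℝ => 1 - x ^ z) :=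
  (concaveOn_const 1 (convex_Ioi 0)).sub (convexOn_rpow_left_Ioi hx0)

end Real

lemma MeasureTheory.Integrable.one_sub_rpow {α : Type*} [MeasurableSpace α] {μ : Measure α}
    {g : α → ℝ} (hg : AEMeasurable g μ) (h0 : ∀ t, 0 ≤ g t) (h1 : ∀ t, g t ≤ 1)
    (hint : Integrable (fun t => 1 - g t) μ) {z : ℝ} (hz : 0 ≤ z) :
    Integrable (fun t => 1 - g t ^ z) μ := by
  refine (hint.const_mul (max 1 z)).mono'
    (aemeasurable_const.sub (hg.pow_const z)).aestronglyMeasurable (ae_of_all _ fun t => ?_)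
  rw [Real.norm_eq_abs, abs_of_nonneg (sub_nonneg.2 (Real.rpow_le_one (h0 t) (h1 t) hz))]
  exact Real.one_sub_rpow_le_max_mul (h0 t) (h1 t) hz

theorem stmt_11_general (F : ℝ → ℝ) (hmono : Monotone F)
    (h0 : ∀ t, 0 ≤ F t) (h1 : ∀ t, F t ≤ 1)
    (hmean : ∫ t in Ioi (0 : ℝ), (1 - F t) = 1)
    (Ψ : ℝ → ℝ) (hΨ : ∀ z, Ψ z = ∫ t in Ioi (0 : ℝ), (1 - F t ^ z)) :
    Ψ 1 = 1 ∧ MonotoneOn Ψ (Ioi 0) ∧ ConcaveOn ℝ (Ioi 0) Ψ := by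
  obtain rfl : Ψ = fun z => ∫ t in Ioi (0 : ℝ), (1 - F t ^ z) := funext hΨ
  have hbase : IntegrableOn (fun t => 1 - F t) (Ioi (0 : ℝ)) :=
    Integrable.of_integral_ne_zero (by rw [hmean]; exact one_ne_zero)
  have hint : ∀ z ∈ Ioi (0 : ℝ), IntegrableOn (fun t => 1 - F t ^ z) (Ioi 0) := fun z hz =>
    hbase.one_sub_rpow hmono.measurable.aemeasurable h0 h1 (le_of_lt hz)
  refine ⟨by simpa using hmean, ?_, ?_⟩
  · exact integral_monotoneOn_of_integrand_ae
      (ae_of_all _ fun t => (Real.monotoneOn_one_sub_rpow (h0 t) (h1 t)).mono Ioi_subset_Ici_self)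
      hint
  · exact integral_concaveOn_of_integrand_ae (convex_Ioi 0)
      (ae_of_all _ fun t => Real.concaveOn_one_sub_rpow (h0 t)) hint

/-- For a unit-mean distribution function `F`, the map
`Ψ_F(z) = ∫₀^∞ (1 - F(t)^z) dt` satisfies `Ψ_F(1) = 1`, is nondecreasing on
`(0,∞)` and concave on `(0,∞)`. -/
theorem stmt_11 (F : ℝ → ℝ) (hmono : Monotone F)
    (hrc : ∀ t, ContinuousWithinAt F (Ici t) t)
    (h0 : ∀ t, 0 ≤ F t) (h1 : ∀ t, F t ≤ 1)
    (hlim : Filter.Tendsto F Filter.atTop (nhds 1))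
    (hmean : ∫ t in Ioi (0 : ℝ), (1 - F t) = 1)
    (Ψ : ℝ → ℝ) (hΨ : ∀ z, Ψ z = ∫ t in Ioi (0 : ℝ), (1 - F t ^ z)) :
    Ψ 1 = 1 ∧ MonotoneOn Ψ (Ioi 0) ∧ ConcaveOn ℝ (Ioi 0) Ψ :=
  stmt_11_general F hmono h0 h1 hmean Ψ hΨ
end
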